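/- Let P and k be positive integers, and let 𝓕 be a finite set of connected cographs, all of height at most k. Then there exists a connected cograph C of height k that is (𝓕,P)-universal, i.e., C admits no (𝓕,P)-partition. -/

import Mathlib

/-- A graph `G` contains a graph `H` if some induced subgraph of `G` is isomorphic to `H`. -/
def Contains {α β : Type} (G : SimpleGraph α) (H : SimpleGraph β) : Prop :=
  ∃ s : Set α, Nonempty ((G.induce s) ≃g H)

/-- `G` is `H`-free if `G` does not contain `H`. -/
def Free {α β : Type} (G : SimpleGraph α) (H : SimpleGraph β) : Prop := ¬ Contains G H

/-- `CographHeight G k` says that `G` is a cograph of height exactly `k`: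
a one-vertex graph has height `0`; if `G` is not connected its height is one more than
the maximum height of its components; if `G` is not anticonnected its height is one more
than the maximum height of its anticomponents. -/
inductive CographHeight : ∀ {V : Type}, SimpleGraph V → ℕ → Prop
  | single {V : Type} (G : SimpleGraph V) (v : V) (hv : ∀ w, w = v) : CographHeight G 0
  | union {V : Type} (G : SimpleGraph V) (k : ℕ) (h : ¬ G.Connected)
      (ht : G.ConnectedComponent → ℕ)
      (hc : ∀ c : G.ConnectedComponent, CographHeight (G.induce c.supp) (ht c))
      (hle : ∀ c, ht c ≤ k) (hmax : ∃ c, ht c = k) :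
      CographHeight G (k + 1)
  | join {V : Type} (G : SimpleGraph V) (k : ℕ) (h : ¬ Gᶜ.Connected)
      (ht : Gᶜ.ConnectedComponent → ℕ)
      (hc : ∀ c : Gᶜ.ConnectedComponent, CographHeight (G.induce c.supp) (ht c))
      (hle : ∀ c, ht c ≤ k) (hmax : ∃ c, ht c = k) :
      CographHeight G (k + 1)


/-- The vertex type `γ` can be partitioned into `P` subsets each of which is a singleton
or satisfies the predicate `Ok`. -/
def HasPartition {γ : Type} (P : ℕ) (Ok : Set γ → Prop) : Prop :=
  ∃ X : Fin P → Set γ, (⋃ i, X i) = Set.univ ∧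
    (Pairwise fun i j => Disjoint (X i) (X j)) ∧
    ∀ i, (∃ v, X i = {v}) ∨ Ok (X i)

/-!
The witness is the graph on words of length `k` over `Fin n` in which two distinct words are
adjacent iff the first position where they differ is even. Its complement is the disjoint union,
over the first letter, of copies of the same graph one level down, so it is a connected cograph of
height `k`; unfolding the (anti)component decomposition letter by letter embeds every connected
cograph of height at most `k` with at most `n` vertices into it as an induced subgraph.
Conversely, if `n > P * s`, then in any `P`-colouring of the words some colour class contains an
induced copy of the level-`k` graph over `Fin s`: colour each first letter by the colour class
found, by induction, in its fibre, and keep `s` first letters of the same colour. With `s` at least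
`2` and at least the order of every member of `𝓕`, that class is neither a singleton nor
`𝓕`-free.
-/


namespace SimpleGraph

variable {V W : Type} {G : SimpleGraph V} {H : SimpleGraph W}

lemma induce_compl (G : SimpleGraph V) (s : Set V) : Gᶜ.induce s = (G.induce s)ᶜ := by
  ext a b
  simp [Subtype.ext_iff]

def Iso.compl (e : G ≃g H) : Gᶜ ≃g Hᶜ where
  toEquiv := e.toEquiv
  map_rel_iff' := by simp [e.map_adj_iff]

lemma Iso.bijOn_supp (e : G ≃g H) (c : G.ConnectedComponent) :
    Set.BijOn e c.supp (e.connectedComponentEquiv c).supp :=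
  ⟨fun v hv => (c.isoEquivSupp e ⟨v, hv⟩).2, e.injective.injOn,
    fun w hw => ⟨_, ((c.isoEquivSupp e).symm ⟨w, hw⟩).2, e.apply_symm_apply w⟩⟩

lemma isIndContained_of_subsingleton [Subsingleton V] [Nonempty W] : G ⊴ H :=
  ⟨{ toFun := fun _ => Classical.arbitrary W
     inj' := fun a b _ => Subsingleton.elim a b
     map_rel_iff' := fun {a b} => by simp [Subsingleton.elim a b] }⟩

lemma Embedding.isIndContained_induce (f : G ↪g H) {s : Set W} (hs : ∀ v, f v ∈ s) :
    G ⊴ H.induce s :=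
  f.isoInduceRange.isIndContained.trans ⟨induceHomOfLE H (Set.range_subset_iff.2 hs)⟩

end SimpleGraph

lemma Fin.eq_of_zero_eq_of_tail_eq {α : Type} {m : ℕ} {u v : Fin (m + 1) → α} (h0 : u 0 = v 0)
    (ht : Fin.tail u = Fin.tail v) : u = v := by
  rw [← Fin.cons_self_tail u, ← Fin.cons_self_tail v, h0, ht]

section

open SimpleGraph

lemma contains_iff_isIndContained {V W : Type} {G : SimpleGraph V} {H : SimpleGraph W} :
    Contains G H ↔ H ⊴ G := by
  rw [isIndContained_iff_exists_iso_induce]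
  exact exists_congr fun _ => ⟨fun ⟨e⟩ => ⟨e.symm⟩, fun ⟨e⟩ => ⟨e.symm⟩⟩

theorem CographHeight.of_iso {V : Type} {G : SimpleGraph V} {m : ℕ} (hG : CographHeight G m)
    {W : Type} {H : SimpleGraph W} (e : G ≃g H) : CographHeight H m := by
  induction hG generalizing W with
  | single G v hv => exact .single H (e v) fun w => by rw [← hv (e.symm w), e.apply_symm_apply]
  | union G k hconn ht _ hle hmax ih =>
    let φ := e.connectedComponentEquiv
    refine .union H k (e.connected_iff.not.mp hconn) (ht ∘ φ.symm) (fun d => ?_) (fun _ => hle _) ?_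
    · obtain ⟨c, rfl⟩ := φ.surjective d
      simpa only [Function.comp_apply, Equiv.symm_apply_apply] using ih c (e.induce (e.bijOn_supp c))
    · obtain ⟨c, hc⟩ := hmax
      exact ⟨φ c, by simpa using hc⟩
  | join G k hconn ht _ hle hmax ih =>
    let φ := e.compl.connectedComponentEquiv
    refine .join H k (e.compl.connected_iff.not.mp hconn) (ht ∘ φ.symm) (fun d => ?_)
      (fun _ => hle _) ?_
    · obtain ⟨c, rfl⟩ := φ.surjective d
      simpa only [Function.comp_apply, Equiv.symm_apply_apply] using
        ih c (e.induce (e.compl.bijOn_supp c))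
    · obtain ⟨c, hc⟩ := hmax
      exact ⟨φ c, by simpa using hc⟩

def universalCograph (n : ℕ) : (k : ℕ) → SimpleGraph (Fin k → Fin n)
  | 0 => ⊥
  | k + 1 => SimpleGraph.fromRel fun u v =>
      u 0 ≠ v 0 ∨ (universalCograph n k)ᶜ.Adj (Fin.tail u) (Fin.tail v)

namespace universalCograph

variable {k n : ℕ}

lemma adj_succ_iff {u v : Fin (k + 1) → Fin n} :
    (universalCograph n (k + 1)).Adj u v ↔
      u 0 ≠ v 0 ∨ (universalCograph n k)ᶜ.Adj (Fin.tail u) (Fin.tail v) := by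
  simp only [universalCograph, fromRel_adj, ne_comm (a := v 0), adj_comm _ (Fin.tail v), or_self,
    and_iff_right_iff_imp]
  rintro (h | h) rfl
  exacts [h rfl, h.ne rfl]

lemma compl_adj_succ_iff {u v : Fin (k + 1) → Fin n} :
    (universalCograph n (k + 1))ᶜ.Adj u v ↔
      u 0 = v 0 ∧ (universalCograph n k).Adj (Fin.tail u) (Fin.tail v) := by
  rw [compl_adj, adj_succ_iff, compl_adj]
  constructor
  · rintro ⟨huv, h⟩
    push Not at h
    exact ⟨h.1, h.2 fun ht => huv (Fin.eq_of_zero_eq_of_tail_eq h.1 ht)⟩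
  · rintro ⟨h0, h⟩
    refine ⟨fun huv => h.ne (congrArg Fin.tail huv), ?_⟩
    tauto

lemma adj_of_head_ne {u v : Fin (k + 1) → Fin n} (h : u 0 ≠ v 0) :
    (universalCograph n (k + 1)).Adj u v :=
  adj_succ_iff.mpr (Or.inl h)

def fiberEquiv (a : Fin n) : (Fin k → Fin n) ≃ {v : Fin (k + 1) → Fin n | v 0 = a} where
  toFun x := ⟨Fin.cons a x, by simp⟩
  invFun v := Fin.tail v.1
  left_inv _ := Fin.tail_cons _ _
  right_inv := by
    rintro ⟨v, rfl⟩
    exact Subtype.ext (Fin.cons_self_tail v)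

def isoComplInduceFiber (a : Fin n) :
    universalCograph n k ≃g (universalCograph n (k + 1))ᶜ.induce {v | v 0 = a} where
  toEquiv := fiberEquiv a
  map_rel_iff' := by
    intro x y
    simp only [fiberEquiv, Equiv.coe_fn_mk, comap_adj, Function.Embedding.coe_subtype,
      compl_adj_succ_iff, Fin.cons_zero, Fin.tail_cons, true_and]

def isoInduceFiber (a : Fin n) :
    (universalCograph n k)ᶜ ≃g (universalCograph n (k + 1)).induce {v | v 0 = a} where
  toEquiv := fiberEquiv a
  map_rel_iff' := by
    intro x y
    simp only [fiberEquiv, Equiv.coe_fn_mk, comap_adj, Function.Embedding.coe_subtype,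
      adj_succ_iff, Fin.cons_zero, Fin.tail_cons, ne_eq, not_true, false_or]

lemma connected (hn : 2 ≤ n) : (universalCograph n k).Connected := by
  have : Nontrivial (Fin n) := Fin.nontrivial_iff_two_le.mpr hn
  cases k with
  | zero => exact .of_subsingleton
  | succ k =>
    refine .mk fun u v => ?_
    by_cases h : u 0 = v 0
    · obtain ⟨a, ha⟩ := exists_ne (u 0)
      exact (adj_of_head_ne (v := fun _ => a) ha.symm).reachable.trans
        (adj_of_head_ne (h ▸ ha)).reachable
    · exact (adj_of_head_ne h).reachable

lemma head_eq_of_reachable_compl {u v : Fin (k + 1) → Fin n}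
    (h : (universalCograph n (k + 1))ᶜ.Reachable u v) : u 0 = v 0 := by
  rw [reachable_iff_reflTransGen] at h
  induction h with
  | refl => rfl
  | tail _ hadj ih => exact ih.trans (compl_adj_succ_iff.mp hadj).1

lemma supp_compl_connectedComponentMk (hn : 2 ≤ n) (u : Fin (k + 1) → Fin n) :
    ((universalCograph n (k + 1))ᶜ.connectedComponentMk u).supp = {v | v 0 = u 0} := by
  ext v
  simp only [ConnectedComponent.mem_supp_iff, ConnectedComponent.eq, Set.mem_ofPred_eq]
  constructor
  · exact head_eq_of_reachable_compl
  · intro h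
    have hfiber := (isoComplInduceFiber (u 0)).connected_iff.mp (connected (k := k) hn)
    exact (hfiber ⟨v, h⟩ ⟨u, rfl⟩).map (Embedding.induce _).toHom

lemma not_connected_compl (hn : 2 ≤ n) : ¬ (universalCograph n (k + 1))ᶜ.Connected := by
  intro h
  have := head_eq_of_reachable_compl (h (fun _ => ⟨0, by omega⟩) (fun _ => ⟨1, by omega⟩))
  simp at this

theorem cographHeight (hn : 2 ≤ n) :
    CographHeight (universalCograph n k) k ∧ CographHeight (universalCograph n k)ᶜ k := by
  induction k with
  | zero =>
    exact ⟨.single _ default fun _ => Subsingleton.elim _ _,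
      .single _ default fun _ => Subsingleton.elim _ _⟩
  | succ k ih =>
    let c₀ := (universalCograph n (k + 1))ᶜ.connectedComponentMk fun _ => ⟨0, by omega⟩
    refine ⟨.join _ k (not_connected_compl hn) (fun _ => k) (fun c => c.ind fun u => ?_)
      (fun _ => le_rfl) ⟨c₀, rfl⟩, .union _ k (not_connected_compl hn) (fun _ => k)
      (fun c => c.ind fun u => ?_) (fun _ => le_rfl) ⟨c₀, rfl⟩⟩
    · rw [supp_compl_connectedComponentMk hn]
      exact ih.2.of_iso (isoInduceFiber (u 0))
    · rw [supp_compl_connectedComponentMk hn]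
      exact ih.1.of_iso (isoComplInduceFiber (u 0))

def embeddingComplSucc {W : Type} {G : SimpleGraph W} (π : W → Fin n) (f : W → Fin k → Fin n)
    (hπ : ∀ ⦃a b⦄, G.Adj a b → π a = π b) (hinj : ∀ ⦃a b⦄, π a = π b → f a = f b → a = b)
    (hadj : ∀ ⦃a b⦄, π a = π b → ((universalCograph n k).Adj (f a) (f b) ↔ G.Adj a b)) :
    G ↪g (universalCograph n (k + 1))ᶜ where
  toFun w := Fin.cons (π w) (f w)
  inj' _ _ h := hinj (Fin.cons_inj.mp h).1 (Fin.cons_inj.mp h).2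
  map_rel_iff' := by
    intro a b
    rw [compl_adj_succ_iff]
    exact ⟨fun ⟨h0, h⟩ => (hadj h0).mp h, fun h => ⟨hπ h, (hadj (hπ h)).mpr h⟩⟩

theorem isIndContained_compl_succ {W : Type} {G : SimpleGraph W} [Finite G.ConnectedComponent]
    (hn : Nat.card G.ConnectedComponent ≤ n)
    (h : ∀ c : G.ConnectedComponent, G.induce c.supp ⊴ universalCograph n k) :
    G ⊴ (universalCograph n (k + 1))ᶜ := by
  let e := (Finite.equivFin G.ConnectedComponent).toEmbedding.trans (Fin.castLEEmb hn)
  let φ c := (h c).some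
  have transport {c d : G.ConnectedComponent} (hcd : c = d) (v : W) (hv : v ∈ c.supp) :
      φ c ⟨v, hv⟩ = φ d ⟨v, hcd ▸ hv⟩ := by
    subst hcd; rfl
  refine ⟨embeddingComplSucc (fun w => e (G.connectedComponentMk w)) (fun w => φ _ ⟨w, rfl⟩)
    (fun a b hab => by rw [ConnectedComponent.sound hab.reachable]) (fun a b hab hf => ?_)
    (fun a b hab => ?_)⟩
  · rw [transport (e.injective hab).symm b rfl] at hf
    exact congrArg Subtype.val ((φ _).injective hf)
  · rw [transport (e.injective hab).symm b rfl]
    exact (φ _).map_adj_iff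

theorem exists_monochromatic_embedding {κ : Type} [Fintype κ] {s : ℕ}
    (hn : Fintype.card κ * s < n) (χ : (Fin k → Fin n) → κ) :
    ∃ p, ∃ g : universalCograph s k ↪g universalCograph n k, ∀ x, χ (g x) = p := by
  induction k with
  | zero =>
    obtain ⟨g⟩ := isIndContained_of_subsingleton (G := universalCograph s 0)
      (H := universalCograph n 0)
    exact ⟨χ (g default), g, fun x => by rw [Subsingleton.elim x default]⟩
  | succ k ih =>
    classical
    choose pa ga hga using fun a : Fin n => ih fun x => χ (Fin.cons a x)
    obtain ⟨p, hp⟩ := Fintype.exists_lt_card_fiber_of_mul_lt_card (f := pa) (by simpa using hn)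
    let c := (Finset.univ.filter fun a => pa a = p).orderEmbOfCardLe hp.le
    have hc (j : Fin s) : pa (c j) = p :=
      (Finset.mem_filter.mp (Finset.orderEmbOfCardLe_mem _ hp.le j)).2
    refine ⟨p, Embedding.complEquiv.symm (embeddingComplSucc (G := (universalCograph s (k + 1))ᶜ)
      (fun u => c (u 0)) (fun u => ga (c (u 0)) (Fin.tail u))
      (fun u v huv => congrArg c (compl_adj_succ_iff.mp huv).1) (fun u v h0 ht => ?_)
      (fun u v h0 => ?_)), fun u => (hga _ _).trans (hc _)⟩
    · replace h0 := c.injective h0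
      rw [h0] at ht
      exact Fin.eq_of_zero_eq_of_tail_eq h0 ((ga _).injective ht)
    · replace h0 := c.injective h0
      rw [compl_adj_succ_iff, and_iff_right h0, h0]
      exact (ga _).map_adj_iff

end universalCograph

theorem CographHeight.isIndContained_universalCograph {W : Type} [Finite W] {G : SimpleGraph W}
    {h : ℕ} (hG : CographHeight G h) {k n : ℕ} (hk : h ≤ k) (hn : Nat.card W ≤ n) :
    (G.Connected → G ⊴ universalCograph n k) ∧ (Gᶜ.Connected → G ⊴ (universalCograph n k)ᶜ) := by
  revert ‹Finite W›
  induction hG generalizing k n with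
  | single G v hv =>
    intro
    have : Subsingleton _ := ⟨fun a b => (hv a).trans (hv b).symm⟩
    have : Nonempty (Fin k → Fin n) := ⟨fun _ => ⟨0, (Nat.card_pos_iff.mpr ⟨⟨v⟩, ‹_›⟩).trans_le hn⟩⟩
    exact ⟨fun _ => isIndContained_of_subsingleton, fun _ => isIndContained_of_subsingleton⟩
  | union G m hconn ht _ hle _ ih =>
    intro
    obtain ⟨k, rfl⟩ : ∃ k', k = k' + 1 := ⟨k - 1, by omega⟩
    refine ⟨fun h => absurd h hconn, fun _ => universalCograph.isIndContained_compl_succ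
      ((Nat.card_le_card_of_surjective _ fun c => c.exists_rep).trans hn) fun c => ?_⟩
    exact (ih c (k := k) ((hle c).trans (by omega)) ((Finite.card_subtype_le _).trans hn)).1
      c.connected_toSimpleGraph
  | join G m hconn ht _ hle _ ih =>
    intro
    obtain ⟨k, rfl⟩ : ∃ k', k = k' + 1 := ⟨k - 1, by omega⟩
    refine ⟨fun _ => IsIndContained.of_compl (universalCograph.isIndContained_compl_succ
      ((Nat.card_le_card_of_surjective _ fun c => c.exists_rep).trans hn) fun c => ?_),
      fun h => absurd h hconn⟩
    have hc := (ih c (k := k) ((hle c).trans (by omega)) ((Finite.card_subtype_le _).trans hn)).2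
      (induce_compl G c.supp ▸ c.connected_toSimpleGraph)
    simpa only [induce_compl, compl_compl] using hc.compl

end

theorem stmt9_general (P k : ℕ) (hk : 0 < k)
    {ι : Type} [Fintype ι] {V : ι → Type} [∀ i, Fintype (V i)]
    (F : ∀ i, SimpleGraph (V i))
    (hconn : ∀ i, (F i).Connected)
    (hheight : ∀ i, ∃ h ≤ k, CographHeight (F i) h) :
    ∃ (γ : Type) (_ : Fintype γ) (C : SimpleGraph γ),
      CographHeight C k ∧ C.Connected ∧
      ¬ HasPartition P (fun X : Set γ => ∃ i, Free (C.induce X) (F i)) := by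
  let s := ∑ i, Fintype.card (V i) + 2
  have hs (i : ι) : Nat.card (V i) ≤ s := by
    have := Finset.single_le_sum (fun j _ => Nat.zero_le (Fintype.card (V j))) (Finset.mem_univ i)
    rw [Nat.card_eq_fintype_card]
    omega
  refine ⟨Fin k → Fin (P * s + 2), inferInstance, universalCograph (P * s + 2) k,
    (universalCograph.cographHeight (by omega)).1, universalCograph.connected (by omega), ?_⟩
  rintro ⟨X, hcover, -, hX⟩
  choose χ hχ using fun v => Set.mem_iUnion.mp (hcover ▸ Set.mem_univ v)
  obtain ⟨p, g, hg⟩ := universalCograph.exists_monochromatic_embedding (κ := Fin P) (s := s)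
    (by simp) χ
  have hgX (x : Fin k → Fin s) : g x ∈ X p := hg x ▸ hχ (g x)
  rcases hX p with ⟨v, hv⟩ | ⟨i, hfree⟩
  · have : Nonempty (Fin k) := ⟨⟨0, hk⟩⟩
    have : Nontrivial (Fin s) := Fin.nontrivial_iff_two_le.mpr (by omega)
    obtain ⟨x, y, hxy⟩ := exists_pair_ne (Fin k → Fin s)
    have hgv (z : Fin k → Fin s) : g z = v := by simpa [hv] using hgX z
    exact hxy (g.injective ((hgv x).trans (hgv y).symm))
  · obtain ⟨h, hhk, hF⟩ := hheight i
    obtain ⟨φ⟩ := (hF.isIndContained_universalCograph hhk (hs i)).1 (hconn i)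
    exact hfree (contains_iff_isIndContained.mpr ((g.comp φ).isIndContained_induce fun _ => hgX _))

/-- Let `P, k` be positive integers and let `𝓕` be a finite set of connected cographs,
all of height at most `k`.  Then there exists a connected cograph `C` of height `k`
that is `(𝓕,P)`-universal, i.e. `C` admits no `(𝓕,P)`-partition. -/
theorem stmt9 (P k : ℕ) (hP : 0 < P) (hk : 0 < k)
    {ι : Type} [Fintype ι] {V : ι → Type} [∀ i, Fintype (V i)]
    (F : ∀ i, SimpleGraph (V i))
    (hconn : ∀ i, (F i).Connected)
    (hheight : ∀ i, ∃ h ≤ k, CographHeight (F i) h) :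
    ∃ (γ : Type) (_ : Fintype γ) (C : SimpleGraph γ),
      CographHeight C k ∧ C.Connected ∧
      ¬ HasPartition P (fun X : Set γ => ∃ i, Free (C.induce X) (F i)) :=
  stmt9_general P k hk F hconn hheight
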